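/- Let K ≥ 1 and let P(z) = ∑_{k=1}^K a_k (1−z)^k be a polynomial with complex coefficients such that Re P(z) ≥ 0 for every z in the open unit disc 𝔻. Then either a_k = 0 for all k = 1, …, K, or a_1 is a positive real number (i.e. Im a_1 = 0 and Re a_1 > 0). -/

import Mathlib

/-! Let `m` be the least index with `a m ≠ 0`. Along `z = 1 - t e^{iθ}`, which lies in the disc
for `0 < t < 2 cos θ`, we have `Re P(z) = t^m Re (a_m e^{imθ}) + O(t^{m+1})`, so
`Re (a_m e^{imθ}) ≥ 0` for all `|θ| ≤ π/2`. For `m ≥ 2` the angle `mθ` sweeps all of `[-π, π]`,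
so `a_m` could be rotated onto the negative real axis; hence `m = 1`, and `θ = 0, ±π/2` give
`Re a₁ ≥ 0` and `Im a₁ = 0`. -/

open Filter Topology Complex
open scoped Real

lemma nonneg_of_eventually_sum_mul_pow_nonneg {s : Finset ℕ} {b : ℕ → ℝ} {m : ℕ} (hm : m ∈ s)
    (hb : ∀ k ∈ s, k < m → b k = 0)
    (h : ∀ᶠ t in 𝓝[>] (0 : ℝ), 0 ≤ ∑ k ∈ s, b k * t ^ k) : 0 ≤ b m := by
  set f : ℝ → ℝ := fun t => ∑ k ∈ s, b k * t ^ (k - m)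
  have hfactor : ∀ t, t ^ m * f t = ∑ k ∈ s, b k * t ^ k := by
    intro t
    rw [Finset.mul_sum]
    refine Finset.sum_congr rfl fun k hk => ?_
    rcases lt_or_ge k m with hkm | hkm
    · simp [hb k hk hkm]
    · rw [mul_left_comm, ← pow_add, Nat.add_sub_cancel' hkm]
  have hf0 : f 0 = b m := by
    refine (Finset.sum_eq_single m (fun k hk hkm => ?_) (absurd hm)).trans (by simp)
    rcases hkm.lt_or_gt with hlt | hgt
    · simp [hb k hk hlt]
    · simp [Nat.sub_ne_zero_of_lt hgt]
  have hf : Continuous f := by fun_prop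
  have hfpos : ∀ᶠ t in 𝓝[>] (0 : ℝ), 0 ≤ f t := by
    filter_upwards [h, self_mem_nhdsWithin] with t ht (htpos : 0 < t)
    exact nonneg_of_mul_nonneg_right ((hfactor t).symm ▸ ht) (pow_pos htpos m)
  exact hf0 ▸ ge_of_tendsto (hf.continuousAt.tendsto.mono_left nhdsWithin_le_nhds) hfpos

lemma norm_one_sub_lt_one {w : ℂ} (h : normSq w < 2 * w.re) : ‖1 - w‖ < 1 := by
  refine (sq_lt_one_iff₀ (norm_nonneg _)).mp ?_
  rw [Complex.sq_norm, normSq_sub]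
  simp only [map_one, one_mul, conj_re]
  linarith

lemma re_sum_mul_ofReal_mul_exp_pow (s : Finset ℕ) (a : ℕ → ℂ) (t θ : ℝ) :
    (∑ k ∈ s, a k * (t * exp (θ * I)) ^ k).re = ∑ k ∈ s, (a k * exp (k * θ * I)).re * t ^ k := by
  rw [re_sum]
  refine Finset.sum_congr rfl fun k _ => ?_
  rw [mul_pow, ← Complex.exp_nat_mul, ← ofReal_pow, mul_left_comm, re_ofReal_mul, mul_comm, mul_assoc]

lemma re_mul_exp_nat_mul_nonneg_of_re_nonneg_on_ball {s : Finset ℕ} {a : ℕ → ℂ}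
    (hP : ∀ z : ℂ, ‖z‖ < 1 → 0 ≤ (∑ k ∈ s, a k * (1 - z) ^ k).re) {m : ℕ} (hm : m ∈ s)
    (hmin : ∀ k ∈ s, k < m → a k = 0) {θ : ℝ} (hθ : θ ∈ Set.Icc (-(π / 2)) (π / 2)) :
    0 ≤ (a m * exp (m * θ * I)).re := by
  have hopen : ∀ θ ∈ Set.Ioo (-(π / 2)) (π / 2), 0 ≤ (a m * exp (m * θ * I)).re := by
    intro θ hθ
    refine nonneg_of_eventually_sum_mul_pow_nonneg (b := fun k => (a k * exp (k * θ * I)).re) hm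
      (fun k hk hkm => by simp [hmin k hk hkm]) ?_
    filter_upwards [Ioo_mem_nhdsGT (mul_pos two_pos (Real.cos_pos_of_mem_Ioo hθ))] with t ht
    have hw : ‖1 - t * exp (θ * I)‖ < 1 := by
      refine norm_one_sub_lt_one ?_
      rw [normSq_mul, normSq_eq_norm_sq (exp _), norm_exp_ofReal_mul_I, normSq_ofReal,
        re_ofReal_mul, exp_ofReal_mul_I_re]
      nlinarith [ht.1, ht.2]
    simpa only [sub_sub_cancel, re_sum_mul_ofReal_mul_exp_pow] using hP _ hw
  have hclosed : IsClosed {θ : ℝ | 0 ≤ (a m * exp (m * θ * I)).re} :=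
    isClosed_le continuous_const (by fun_prop)
  rw [← closure_Ioo (by linarith [Real.pi_pos])] at hθ
  exact hclosed.closure_subset_iff.mpr hopen hθ

lemma eq_zero_of_forall_re_mul_exp_nonneg {c : ℂ}
    (h : ∀ φ ∈ Set.Icc (-π) π, 0 ≤ (c * exp (φ * I)).re) : c = 0 := by
  by_contra hc
  set w := -c⁻¹
  -- rotating by `arg w` turns `c` into the negative real number `-1 / ‖w‖`
  have hw : (‖w‖ : ℂ) * (c * exp (arg w * I)) = -1 := by
    rw [mul_left_comm, norm_mul_exp_arg_mul_I, mul_neg, mul_inv_cancel₀ hc]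
  have hre := congrArg re hw
  rw [re_ofReal_mul, neg_re, one_re] at hre
  nlinarith [h (arg w) ⟨(neg_pi_lt_arg w).le, arg_le_pi w⟩, norm_nonneg w]

lemma eq_zero_of_forall_re_mul_exp_nat_mul_nonneg {c : ℂ} {m : ℕ} (hm : 2 ≤ m)
    (h : ∀ θ ∈ Set.Icc (-(π / 2)) (π / 2), 0 ≤ (c * exp (m * θ * I)).re) : c = 0 := by
  have hm' : (2 : ℝ) ≤ m := by exact_mod_cast hm
  refine eq_zero_of_forall_re_mul_exp_nonneg fun φ hφ => ?_
  have hφm : φ / m ∈ Set.Icc (-(π / 2)) (π / 2) := by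
    constructor
    · rw [le_div_iff₀ (by linarith)]; nlinarith [hφ.1, Real.pi_pos]
    · rw [div_le_iff₀ (by linarith)]; nlinarith [hφ.2, Real.pi_pos]
  convert h (φ / m) hφm using 4
  push_cast
  field_simp [show (m : ℂ) ≠ 0 by exact_mod_cast (by omega : m ≠ 0)]

lemma im_eq_zero_and_re_nonneg_of_forall_re_mul_exp_nonneg {c : ℂ}
    (h : ∀ θ ∈ Set.Icc (-(π / 2)) (π / 2), 0 ≤ (c * exp (θ * I)).re) : c.im = 0 ∧ 0 ≤ c.re := by
  have hpi := Real.pi_pos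
  have hre : 0 ≤ c.re := by simpa using h 0 ⟨by linarith, by linarith⟩
  have him_nonpos : c.im ≤ 0 := by
    simpa [exp_pi_div_two_mul_I] using h (π / 2) ⟨by linarith, le_rfl⟩
  have him_nonneg : 0 ≤ c.im := by
    simpa [Complex.exp_neg, exp_pi_div_two_mul_I] using h (-(π / 2)) ⟨le_rfl, by linarith⟩
  exact ⟨le_antisymm him_nonpos him_nonneg, hre⟩

theorem stmt14 (K : ℕ) (a : ℕ → ℂ)
    (hP : ∀ z : ℂ, ‖z‖ < 1 → 0 ≤ (∑ k ∈ Finset.Icc 1 K, a k * (1 - z) ^ k).re) :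
    (∀ k ∈ Finset.Icc 1 K, a k = 0) ∨ ((a 1).im = 0 ∧ 0 < (a 1).re) := by
  classical
  refine or_iff_not_imp_left.mpr fun hne => ?_
  push Not at hne
  set m := Nat.find hne
  obtain ⟨hm, ham⟩ : m ∈ Finset.Icc 1 K ∧ a m ≠ 0 := Nat.find_spec hne
  have hmin : ∀ k ∈ Finset.Icc 1 K, k < m → a k = 0 := fun k hk hkm =>
    not_not.mp fun hak => Nat.find_min hne hkm ⟨hk, hak⟩
  have hθ := fun θ => re_mul_exp_nat_mul_nonneg_of_re_nonneg_on_ball hP hm hmin (θ := θ)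
  obtain hm1 | hm2 : m = 1 ∨ 2 ≤ m := by grind
  · rw [hm1] at hθ ham
    obtain ⟨him, hre⟩ := im_eq_zero_and_re_nonneg_of_forall_re_mul_exp_nonneg (by simpa using hθ)
    exact ⟨him, hre.lt_of_ne fun h => ham (Complex.ext h.symm him)⟩
  · exact absurd (eq_zero_of_forall_re_mul_exp_nat_mul_nonneg hm2 hθ) ham
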